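/- arXiv:0908.3305 — 6 statements merged into one kernel-verified Lean document; each statement's English description precedes it below -/
import Mathlib

section
/- For every cycle C_n with n ≥ 4, the domination polynomial satisfies D(C_n, x) = x·(D(C_{n-1}, x) + D(C_{n-2}, x) + D(C_{n-3}, x)). -/
open Polynomial SimpleGraph

/-- `S` is a dominating set of `G`: every vertex is in `S` or adjacent to a vertex of `S`. -/
def IsDomSet {V : Type*} (G : SimpleGraph V) (S : Finset V) : Prop :=
  ∀ v : V, v ∈ S ∨ ∃ u ∈ S, G.Adj u v

/-- The domination polynomial `D(G,x) = ∑ d(G,i) xⁱ`. -/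
noncomputable def domPoly {V : Type*} [Fintype V] (G : SimpleGraph V) : Polynomial ℤ :=
  ∑ i ∈ Finset.range (Fintype.card V + 1),
    (Nat.card {S : Finset V // IsDomSet G S ∧ S.card = i} : ℤ) • (X : Polynomial ℤ) ^ i

/-!
Dominating sets of `C_n` are the subsets of `{0, …, n - 1}` whose cyclic gaps are all at most `3`.
For `n ≥ 4` such a set has a second element `a + k`, with `1 ≤ k ≤ 3`, right after its minimum `a`.
Deleting `a` and shifting the rest down by `k` gives a dominating set of `C_{n-k}` with one element
fewer, and every dominating set of `C_{n-k}` arises exactly once this way: keep its minimum and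
shift the whole set up by `k`. Summing `x ^ |S|` over the three values of `k` gives the recurrence.
-/

open Finset

theorem domPoly_eq_sum {V : Type*} [Fintype V] (G : SimpleGraph V) [DecidablePred (IsDomSet G)] :
    domPoly G = ∑ S ∈ univ.filter (IsDomSet G), X ^ #S := by
  rw [domPoly, ← sum_fiberwise_of_maps_to (g := card) (t := range (Fintype.card V + 1))
    fun S _ => mem_range.2 (Nat.lt_succ_of_le (card_le_univ S))]
  refine sum_congr rfl fun i _ => ?_
  rw [sum_congr rfl fun S hS => by rw [(mem_filter.1 hS).2], sum_const, Nat.card_eq_fintype_card,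
    Fintype.card_subtype, filter_filter, natCast_zsmul]

/-- The window `{v, v + 1, v + 2}` (mod `n`) is the closed neighbourhood of `v + 1` in `C_n`; the
wrap-around is spelled out with `s + n` rather than `% n`, which keeps all the arithmetic linear. -/
def IsCycleDomSet (n : ℕ) (S : Finset ℕ) : Prop :=
  (∀ s ∈ S, s < n) ∧ ∀ v < n, ∃ s ∈ S, v ≤ s ∧ s ≤ v + 2 ∨ v ≤ s + n ∧ s + n ≤ v + 2

instance (n : ℕ) : DecidablePred (IsCycleDomSet n) := fun _ => by
  unfold IsCycleDomSet
  infer_instance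

def cycleDomSets (n : ℕ) : Finset (Finset ℕ) :=
  (range n).powerset.filter (IsCycleDomSet n)

theorem mem_cycleDomSets {n : ℕ} {S : Finset ℕ} : S ∈ cycleDomSets n ↔ IsCycleDomSet n S := by
  simp only [cycleDomSets, mem_filter, mem_powerset, and_iff_right_iff_imp]
  exact fun h s hs => mem_range.2 (h.1 s hs)

theorem eq_or_cycleGraph_adj_iff {n : ℕ} {u v : Fin n} :
    u = v ∨ (cycleGraph n).Adj u v ↔
      v.val ≤ u.val + 1 ∧ u.val ≤ v.val + 1 ∨ u.val + n = v.val + 1 ∨ v.val + n = u.val + 1 := by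
  rw [cycleGraph_adj', Fin.ext_iff]
  have hu := u.isLt
  have hv := v.isLt
  rcases lt_trichotomy u v with h | rfl | h
  · rw [Fin.coe_sub_iff_lt.2 h, Fin.coe_sub_iff_le.2 h.le]
    omega
  · simp
  · rw [Fin.coe_sub_iff_lt.2 h, Fin.coe_sub_iff_le.2 h.le]
    omega

theorem isDomSet_cycleGraph_iff {n : ℕ} (S : Finset (Fin n)) :
    IsDomSet (cycleGraph n) S ↔ IsCycleDomSet n (S.image Fin.val) := by
  have hlt : ∀ s ∈ S.image Fin.val, s < n := by simp
  have hcentred : IsDomSet (cycleGraph n) S ↔ ∀ v < n, ∃ s ∈ S.image Fin.val,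
      v ≤ s + 1 ∧ s ≤ v + 1 ∨ s + n = v + 1 ∨ v + n = s + 1 := by
    refine Fin.forall_iff.trans (forall₂_congr fun v hv => ?_)
    simp only [exists_mem_image, ← eq_or_cycleGraph_adj_iff (v := ⟨v, hv⟩)]
    constructor
    · rintro (h | ⟨u, hu, h⟩)
      exacts [⟨_, h, Or.inl rfl⟩, ⟨u, hu, Or.inr h⟩]
    · rintro ⟨u, hu, rfl | h⟩
      exacts [Or.inl hu, Or.inr ⟨u, hu, h⟩]
  rw [hcentred, IsCycleDomSet, and_iff_right hlt]
  constructor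
  · intro h v hv
    obtain ⟨s, hs, hsv⟩ := h (if v + 1 < n then v + 1 else 0) (by split_ifs <;> omega)
    have := hlt s hs
    exact ⟨s, hs, by split_ifs at hsv <;> omega⟩
  · intro h v hv
    obtain ⟨s, hs, hsv⟩ := h (if v = 0 then n - 1 else v - 1) (by split_ifs <;> omega)
    have := hlt s hs
    exact ⟨s, hs, by split_ifs at hsv <;> omega⟩

theorem domPoly_cycleGraph (n : ℕ) : domPoly (cycleGraph n) = ∑ S ∈ cycleDomSets n, X ^ #S := by
  classical
  have himage : cycleDomSets n = (univ.filter (IsDomSet (cycleGraph n))).image (image Fin.val) := by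
    rw [cycleDomSets, ← image_fin_univ, powerset_image, powerset_univ, filter_image]
    simp only [isDomSet_cycleGraph_iff]
  rw [domPoly_eq_sum, himage, sum_image fun S _ T _ h => image_injective Fin.val_injective h]
  simp only [card_image_of_injective _ Fin.val_injective]

section

variable {n m k a : ℕ} {S T : Finset ℕ}

theorem IsCycleDomSet.exists_le_two (h : IsCycleDomSet n S) (hn : 0 < n) : ∃ s ∈ S, s ≤ 2 := by
  obtain ⟨s, hs, hs'⟩ := h.2 0 hn
  exact ⟨s, hs, by omega⟩

theorem IsCycleDomSet.nonempty (h : IsCycleDomSet n S) (hn : 0 < n) : S.Nonempty :=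
  let ⟨s, hs, _⟩ := h.exists_le_two hn
  ⟨s, hs⟩

theorem IsCycleDomSet.exists_mem_gt_le_add_three (h : IsCycleDomSet n S) (hn : 4 ≤ n)
    (hmin : ∀ s ∈ S, a ≤ s) : ∃ s ∈ S, a < s ∧ s ≤ a + 3 := by
  obtain ⟨s₀, hs₀, hs₀2⟩ := h.exists_le_two (by omega)
  have := hmin s₀ hs₀
  obtain ⟨s, hs, hs'⟩ := h.2 (a + 1) (by omega)
  have := hmin s hs
  exact ⟨s, hs, by omega⟩

theorem IsCycleDomSet.of_insert_image_add (h : IsCycleDomSet (m + k) (insert a (T.image (· + k))))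
    (ha : a ∈ T) (hmin : ∀ t ∈ T, a ≤ t) : IsCycleDomSet m T := by
  have mem : ∀ s, s ∈ insert a (T.image (· + k)) ↔ s = a ∨ ∃ t ∈ T, t + k = s := by simp
  refine ⟨fun t ht => ?_, fun w hw => ?_⟩
  · have := h.1 (t + k) ((mem _).2 (Or.inr ⟨t, ht, rfl⟩))
    omega
  obtain ⟨s₀, hs₀, hs₀2⟩ := h.exists_le_two (by omega)
  have ha2 : a ≤ 2 := by
    rcases (mem s₀).1 hs₀ with rfl | ⟨t, ht, rfl⟩
    · exact hs₀2
    · have := hmin t ht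
      omega
  by_cases hwa : w < a
  · exact ⟨a, ha, by omega⟩
  obtain ⟨s, hs, hsw⟩ := h.2 (w + k) (by omega)
  rcases (mem s).1 hs with rfl | ⟨t, ht, rfl⟩
  · exact ⟨s, ha, by omega⟩
  · exact ⟨t, ht, by omega⟩

theorem IsCycleDomSet.insert_image_add (h : IsCycleDomSet m T) (ha : a ∈ T)
    (hmin : ∀ t ∈ T, a ≤ t) (hk : k ≤ 3) : IsCycleDomSet (m + k) (insert a (T.image (· + k))) := by
  have mem : ∀ s, s ∈ insert a (T.image (· + k)) ↔ s = a ∨ ∃ t ∈ T, t + k = s := by simp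
  have haS : a ∈ insert a (T.image (· + k)) := mem_insert_self _ _
  have hma := h.1 a ha
  obtain ⟨s₀, hs₀, hs₀2⟩ := h.exists_le_two (by omega)
  have := hmin s₀ hs₀
  refine ⟨fun s hs => ?_, fun v hv => ?_⟩
  · rcases (mem s).1 hs with rfl | ⟨t, ht, rfl⟩
    · omega
    · have := h.1 t ht
      omega
  by_cases hva : v ≤ a
  · exact ⟨a, haS, by omega⟩
  by_cases hvak : v ≤ a + k
  · exact ⟨a + k, (mem _).2 (Or.inr ⟨a, ha, rfl⟩), by omega⟩
  obtain ⟨t, ht, htv⟩ := h.2 (v - k) (by omega)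
  have := hmin t ht
  by_cases hwrap : v - k ≤ t ∧ t ≤ v - k + 2
  · exact ⟨t + k, (mem _).2 (Or.inr ⟨t, ht, rfl⟩), by omega⟩
  · exact ⟨a, haS, by omega⟩

theorem exists_eq_insert_image_add {b : ℕ} (ha : a ∈ S) (hmin : ∀ s ∈ S, a ≤ s) (hb : b ∈ S)
    (hab : a < b) (hgap : ∀ s ∈ S, a < s → b ≤ s) :
    ∃ T : Finset ℕ, a ∈ T ∧ (∀ t ∈ T, a ≤ t) ∧ S = insert a (T.image (· + (b - a))) := by
  have hgap' : ∀ s ∈ S, s ≠ a → b ≤ s := fun s hs hsa =>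
    hgap s hs (lt_of_le_of_ne (hmin s hs) (Ne.symm hsa))
  refine ⟨(S.erase a).image (· - (b - a)), mem_image.2 ⟨b, mem_erase.2 ⟨hab.ne', hb⟩, by omega⟩,
    ?_, ?_⟩
  · simp only [mem_image, mem_erase, forall_exists_index, and_imp]
    rintro _ s hsa hs rfl
    have := hgap' s hs hsa
    omega
  · ext s
    simp only [mem_insert, mem_image, mem_erase]
    constructor
    · intro hs
      by_cases hsa : s = a
      · exact Or.inl hsa
      · have := hgap' s hs hsa
        exact Or.inr ⟨s - (b - a), ⟨s, ⟨hsa, hs⟩, rfl⟩, by omega⟩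
    · rintro (rfl | ⟨_, ⟨s', ⟨hsa, hs'⟩, rfl⟩, rfl⟩)
      · exact ha
      · have := hgap' s' hs' hsa
        rwa [Nat.sub_add_cancel (by omega)]

noncomputable def insertFirstGap (k : ℕ) (T : Finset ℕ) : Finset ℕ :=
  insert (sInf (T : Set ℕ)) (T.image (· + k))

theorem insertFirstGap_eq (ha : a ∈ T) (hmin : ∀ t ∈ T, a ≤ t) :
    insertFirstGap k T = insert a (T.image (· + k)) := by
  rw [insertFirstGap, IsLeast.csInf_eq ⟨mem_coe.2 ha, fun t ht => hmin t ht⟩]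

theorem Finset.Nonempty.isLeast_sInf (hT : T.Nonempty) : IsLeast (T : Set ℕ) (sInf (T : Set ℕ)) :=
  ⟨Nat.sInf_mem (coe_nonempty.2 hT), fun _ ht => Nat.sInf_le ht⟩

theorem isLeast_image_add (hT : T.Nonempty) :
    IsLeast (T.image (· + k) : Set ℕ) (sInf (T : Set ℕ) + k) := by
  rw [coe_image]
  exact add_left_mono.map_isLeast hT.isLeast_sInf

theorem sInf_notMem_image_add (hk : 0 < k) : sInf (T : Set ℕ) ∉ T.image (· + k) := by
  simp only [mem_image, not_exists, not_and]
  intro t ht h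
  have := Nat.sInf_le (mem_coe.2 ht)
  omega

theorem card_insertFirstGap (hk : 0 < k) : #(insertFirstGap k T) = #T + 1 := by
  rw [insertFirstGap, card_insert_of_notMem (sInf_notMem_image_add hk),
    card_image_of_injective _ (add_left_injective k)]

theorem isLeast_insertFirstGap : IsLeast (insertFirstGap k T : Set ℕ) (sInf (T : Set ℕ)) := by
  refine ⟨mem_insert_self _ _, fun s hs => ?_⟩
  simp only [insertFirstGap, coe_insert, coe_image, Set.mem_insert_iff, Set.mem_image] at hs
  rcases hs with rfl | ⟨t, ht, rfl⟩
  · exact le_rfl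
  · exact (Nat.sInf_le ht).trans (Nat.le_add_right t k)

theorem insertFirstGap_inj {k' : ℕ} {T' : Finset ℕ} (hT : T.Nonempty) (hT' : T'.Nonempty)
    (hk : 0 < k) (hk' : 0 < k') (h : insertFirstGap k T = insertFirstGap k' T') :
    k = k' ∧ T = T' := by
  have hmin : sInf (T : Set ℕ) = sInf (T' : Set ℕ) :=
    (h ▸ isLeast_insertFirstGap).unique isLeast_insertFirstGap
  have himage : T.image (· + k) = T'.image (· + k') := by
    rw [← erase_insert (sInf_notMem_image_add hk), ← erase_insert (sInf_notMem_image_add hk'),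
      ← insertFirstGap, ← insertFirstGap, h, hmin]
  have hsecond : sInf (T : Set ℕ) + k = sInf (T' : Set ℕ) + k' :=
    (himage ▸ isLeast_image_add hT).unique (isLeast_image_add hT')
  obtain rfl : k = k' := by omega
  exact ⟨rfl, image_injective (add_left_injective k) himage⟩

theorem isCycleDomSet_insertFirstGap (h : IsCycleDomSet m T) (hm : 0 < m) (hk : k ≤ 3) :
    IsCycleDomSet (m + k) (insertFirstGap k T) := by
  have hT := (h.nonempty hm).isLeast_sInf
  rw [insertFirstGap_eq hT.1 hT.2]
  exact h.insert_image_add hT.1 hT.2 hk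

theorem IsCycleDomSet.exists_insertFirstGap_eq (h : IsCycleDomSet n S) (hn : 4 ≤ n) :
    ∃ k ∈ ({1, 2, 3} : Finset ℕ), ∃ T, IsCycleDomSet (n - k) T ∧ insertFirstGap k T = S := by
  obtain ⟨a, ha, hmin⟩ := S.exists_min_image id (h.nonempty (by omega))
  obtain ⟨s, hs, has, hsa⟩ := h.exists_mem_gt_le_add_three hn (a := a) hmin
  obtain ⟨b, hb, hbmin⟩ := (S.filter (a < ·)).exists_min_image id ⟨s, mem_filter.2 ⟨hs, has⟩⟩
  rw [mem_filter] at hb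
  have hbs : b ≤ s := hbmin s (mem_filter.2 ⟨hs, has⟩)
  obtain ⟨T, haT, hTmin, hST⟩ := exists_eq_insert_image_add ha hmin hb.1 hb.2
    fun s hs has => hbmin s (mem_filter.2 ⟨hs, has⟩)
  refine ⟨b - a, by simp only [mem_insert, mem_singleton]; omega, T, ?_,
    by rw [insertFirstGap_eq haT hTmin, hST]⟩
  refine IsCycleDomSet.of_insert_image_add (k := b - a) ?_ haT hTmin
  rwa [← hST, Nat.sub_add_cancel (by omega)]

end

theorem cycleDomSets_eq_image {n : ℕ} (hn : 4 ≤ n) :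
    cycleDomSets n = (({1, 2, 3} : Finset ℕ).sigma fun k => cycleDomSets (n - k)).image
      fun p => insertFirstGap p.1 p.2 := by
  ext S
  simp only [mem_image, mem_sigma, mem_cycleDomSets, Sigma.exists]
  constructor
  · intro h
    obtain ⟨k, hk, T, hT, rfl⟩ := h.exists_insertFirstGap_eq hn
    exact ⟨k, T, ⟨hk, hT⟩, rfl⟩
  · rintro ⟨k, T, ⟨hk, hT⟩, rfl⟩
    simp only [mem_insert, mem_singleton] at hk
    have := isCycleDomSet_insertFirstGap hT (k := k) (by omega) (by omega)
    rwa [Nat.sub_add_cancel (by omega)] at this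

theorem sum_pow_card_cycleDomSets {R : Type*} [CommSemiring R] (x : R) {n : ℕ} (hn : 4 ≤ n) :
    ∑ S ∈ cycleDomSets n, x ^ #S =
      x * (∑ S ∈ cycleDomSets (n - 1), x ^ #S + ∑ S ∈ cycleDomSets (n - 2), x ^ #S +
        ∑ S ∈ cycleDomSets (n - 3), x ^ #S) := by
  rw [cycleDomSets_eq_image hn, sum_image, sum_sigma]
  · simp [card_insertFirstGap, pow_succ, mul_add, mul_sum, mul_comm, add_assoc]
  rintro ⟨k, T⟩ hp ⟨k', T'⟩ hq h
  simp only [mem_coe, mem_sigma, mem_insert, mem_singleton, mem_cycleDomSets] at hp hq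
  dsimp only at h
  obtain ⟨rfl, rfl⟩ := insertFirstGap_inj (hp.2.nonempty (by omega)) (hq.2.nonempty (by omega))
    (by omega) (by omega) h
  rfl

theorem domPoly_cycle_recurrence (n : ℕ) (hn : 4 ≤ n) :
    domPoly (cycleGraph n) =
      X * (domPoly (cycleGraph (n - 1)) + domPoly (cycleGraph (n - 2)) +
        domPoly (cycleGraph (n - 3))) := by
  simp only [domPoly_cycleGraph]
  exact sum_pow_card_cycleDomSets X hn
end

section
/- For every positive integer n, D(C_n, -1) = 3 if n ≡ 0 (mod 4), and D(C_n, -1) = -1 otherwise. -/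
open Polynomial SimpleGraph

/-!
`D(Cₙ, -1)` is the signed count `∑ (-1)^|S|` over the dominating sets `S` of `Cₙ`. Encoding `S` by
its indicator string `g` on `ℤ/n`, `S` dominates iff every cyclic window `g(v-1) g(v) g(v+1)`
contains a `1`, so the signed count is a cyclic product of window weights, i.e. the trace of the
`n`-th power of a `4 × 4` transfer matrix `M` indexed by pairs of consecutive letters. `M` has
characteristic polynomial `x (x + 1) (x² + 1)`, so `M⁵ = M` and `tr Mⁿ` is `4`-periodic for
`n ≥ 1`; its values for `n = 1, 2, 3, 4` are `-1, -1, -1, 3`.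
-/

open Finset

theorem eval_domPoly {V : Type*} [Fintype V] (G : SimpleGraph V) [DecidablePred (IsDomSet G)]
    (x : ℤ) : (domPoly G).eval x = ∑ S with IsDomSet G S, x ^ #S := by
  have hcard (S : Finset V) : #S ∈ range (Fintype.card V + 1) :=
    mem_range_succ_iff.mpr (card_le_univ S)
  rw [← sum_fiberwise_of_maps_to (fun S _ ↦ hcard S), domPoly, eval_finsetSum]
  refine sum_congr rfl fun i _ ↦ ?_
  rw [eval_smul, eval_pow, eval_X, smul_eq_mul, filter_filter, Nat.card_eq_fintype_card,
    Fintype.card_subtype, ← nsmul_eq_mul, ← sum_const]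
  exact sum_congr rfl fun S hS ↦ by rw [(mem_filter.mp hS).2.2]

theorem isDomSet_cycleGraph_iff_s2 {n : ℕ} [NeZero n] (S : Finset (Fin n)) :
    IsDomSet (cycleGraph n) S ↔ ∀ v, v - 1 ∈ S ∨ v ∈ S ∨ v + 1 ∈ S := by
  obtain _ | _ | m := n
  · exact absurd rfl (NeZero.ne 0)
  · simp [IsDomSet, cycleGraph, Fin.fin_one_eq_zero]
  · refine forall_congr' fun v ↦ ?_
    have hadj (u : Fin (m + 2)) : (cycleGraph (m + 2)).Adj u v ↔ u = v + 1 ∨ u = v - 1 := by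
      rw [cycleGraph_adj, sub_eq_iff_eq_add', sub_eq_iff_eq_add', eq_sub_iff_add_eq,
        eq_comm (a := v)]
    simp only [hadj]
    aesop

namespace Matrix

variable {σ α R : Type*} [Fintype σ] [DecidableEq σ] [CommSemiring R]

theorem pow_succ_apply_eq_sum_prod (A : Matrix σ σ R) (n : ℕ) (i j : σ) :
    (A ^ (n + 1)) i j = ∑ h : Fin n → σ,
      ∏ k, A (Fin.cons (α := fun _ ↦ σ) i h k) (Fin.snoc (α := fun _ ↦ σ) h j k) := by
  induction n generalizing i with
  | zero => simp [Fin.snoc]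
  | succ n ih =>
    rw [pow_succ', mul_apply, ← (Fin.consEquiv fun _ ↦ σ).sum_comp, Fintype.sum_prod_type]
    refine Fintype.sum_congr _ _ fun l ↦ ?_
    simp only [Fin.consEquiv, Equiv.coe_fn_mk, ← Fin.cons_snoc_eq_snoc_cons, Fin.prod_univ_succ,
      Fin.cons_zero, Fin.cons_succ, ih, mul_sum]

theorem trace_pow_eq_sum_prod (A : Matrix σ σ R) (n : ℕ) [NeZero n] :
    trace (A ^ n) = ∑ h : Fin n → σ, ∏ k, A (h k) (h (k + 1)) := by
  obtain ⟨m, rfl⟩ := Nat.exists_eq_succ_of_ne_zero (NeZero.ne n)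
  simp only [trace, diag, pow_succ_apply_eq_sum_prod, Fin.snoc_eq_cons_rotate, finRotate_apply]
  rw [← Fintype.sum_prod_type']
  exact Fintype.sum_equiv (Fin.consEquiv fun _ ↦ σ) _ _ fun _ ↦ rfl

def windowMatrix [DecidableEq α] (T : α → α → α → R) : Matrix (α × α) (α × α) R :=
  fun p q ↦ if p.2 = q.1 then T p.1 p.2 q.2 else 0

theorem trace_windowMatrix_pow [Fintype α] [DecidableEq α] (T : α → α → α → R) (n : ℕ)
    [NeZero n] :
    trace (windowMatrix T ^ n) = ∑ g : Fin n → α, ∏ k, T (g (k - 1)) (g k) (g (k + 1)) := by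
  rw [trace_pow_eq_sum_prod, ← (Equiv.arrowProdEquivProdArrow _ _ _).symm.sum_comp,
    Fintype.sum_prod_type, sum_comm]
  refine Fintype.sum_congr _ _ fun g ↦ ?_
  rw [Fintype.sum_eq_single (fun k ↦ g (k - 1))]
  · simp [windowMatrix]
  · intro f hf
    obtain ⟨k, hk⟩ := Function.ne_iff.mp hf
    refine prod_eq_zero (mem_univ (k - 1)) ?_
    simp [windowMatrix, Ne.symm hk]

end Matrix

/-- `a`, `b`, `c` record whether `v - 1`, `v`, `v + 1` lie in the vertex set. -/
def dominationWeight (a b c : Bool) : ℤ := if a || b || c then (if b then -1 else 1) else 0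

theorem sum_isDomSet_cycleGraph_neg_one_pow {n : ℕ} [NeZero n]
    [DecidablePred (IsDomSet (cycleGraph n))] :
    ∑ S with IsDomSet (cycleGraph n) S, (-1 : ℤ) ^ #S =
      ∑ g : Fin n → Bool, ∏ v, dominationWeight (g (v - 1)) (g v) (g (v + 1)) := by
  have hbij : Function.Bijective fun (S : Finset (Fin n)) v ↦ decide (v ∈ S) :=
    ⟨fun S T h ↦ ext fun v ↦ by simpa using congrFun h v,
      fun g ↦ ⟨({v | g v} : Finset _), funext fun v ↦ by simp⟩⟩
  rw [sum_filter]
  refine Fintype.sum_bijective _ hbij _ _ fun S ↦ ?_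
  simp only [dominationWeight, Bool.or_eq_true, decide_eq_true_eq, or_assoc,
    Fintype.prod_ite_zero, ← isDomSet_cycleGraph_iff_s2]
  congr 1
  simp [prod_ite_mem]

def dominationMatrix : Matrix (Bool × Bool) (Bool × Bool) ℤ :=
  Matrix.windowMatrix dominationWeight

theorem dominationMatrix_pow_add_four {n : ℕ} (hn : 1 ≤ n) :
    dominationMatrix ^ (n + 4) = dominationMatrix ^ n := by
  obtain ⟨m, rfl⟩ := Nat.exists_eq_add_of_le' hn
  have hfive : dominationMatrix ^ 5 = dominationMatrix := by decide
  rw [show m + 1 + 4 = m + 5 by ring, pow_add, hfive, pow_succ]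

theorem trace_dominationMatrix_pow {n : ℕ} (hn : 1 ≤ n) :
    Matrix.trace (dominationMatrix ^ n) = if n % 4 = 0 then 3 else -1 := by
  induction n using Nat.strong_induction_on with
  | _ n ih =>
    obtain hsmall | hlarge := Nat.lt_or_ge n 5
    · interval_cases n <;> decide
    · obtain ⟨m, rfl⟩ := Nat.exists_eq_add_of_le' hlarge
      rw [dominationMatrix_pow_add_four (by omega), ih (m + 1) (by omega) (by omega),
        show (m + 5) % 4 = (m + 1) % 4 by omega]

theorem domPoly_cycle_eval_neg_one (n : ℕ) (hn : 1 ≤ n) :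
    (domPoly (cycleGraph n)).eval (-1) = if n % 4 = 0 then 3 else -1 := by
  classical
  have : NeZero n := NeZero.of_pos hn
  rw [eval_domPoly, sum_isDomSet_cycleGraph_neg_one_pow, ← Matrix.trace_windowMatrix_pow]
  exact trace_dominationMatrix_pow hn
end

section
/- Define integers a_n by a_1 = -3, a_2 = 3, a_3 = -9, and a_n = -3(a_{n-1} + a_{n-2} + a_{n-3}) for n ≥ 4 (so a_n = D(C_n, -3)). Then for every n ≥ 1, the 3-adic valuation ord_3(a_n) is at least ⌈n/3⌉. -/
set_option maxRecDepth 10000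


/-- `a n = D(Cₙ, -3)`: `a 1 = -3`, `a 2 = 3`, `a 3 = -9`,
and `a n = -3(a (n-1) + a (n-2) + a (n-3))` for `n ≥ 4`. -/
def aSeq : ℕ → ℤ
  | 0 => 0
  | 1 => -3
  | 2 => 3
  | 3 => -9
  | (n + 4) => -3 * (aSeq (n + 3) + aSeq (n + 2) + aSeq (n + 1))

def Sset : List (ZMod 9 × ZMod 9 × ZMod 9) :=
  [(8, 1, 6), (3, 2, 6), (7, 7, 6), (7, 2, 3), (6, 4, 3), (5, 5, 3), (5, 4, 6),
   (3, 8, 6), (1, 1, 6), (1, 8, 3), (6, 7, 3), (2, 2, 3), (2, 7, 6), (3, 5, 6),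
   (4, 4, 6), (4, 5, 3), (6, 1, 3), (8, 8, 3)]

lemma step_mem : ∀ t ∈ Sset,
    (-(t.1 + t.2.1 + t.2.2), 3 * t.1 + 2 * t.2.1 + 2 * t.2.2,
      -(3 * (-(t.1 + t.2.1 + t.2.2)) + 3 * (3 * t.1 + 2 * t.2.1 + 2 * t.2.2) + t.2.2)) ∈ Sset := by
  decide

lemma ne_zero_mem : ∀ t ∈ Sset, t.1 ≠ 0 ∧ t.2.1 ≠ 0 ∧ t.2.2 ≠ 0 := by decide

lemma key : ∀ m : ℕ, ∃ X Y Z : ℤ,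
    aSeq (3 * m + 1) = 3 ^ (m + 1) * X ∧ aSeq (3 * m + 2) = 3 ^ (m + 1) * Y ∧
    aSeq (3 * m + 3) = 3 ^ (m + 1) * Z ∧
    ((X : ZMod 9), (Y : ZMod 9), (Z : ZMod 9)) ∈ Sset := by
  intro m
  induction m with
  | zero =>
      refine ⟨-1, 1, -3, by norm_num [aSeq], by norm_num [aSeq], by norm_num [aSeq], ?_⟩
      decide
  | succ m ih =>
      obtain ⟨X, Y, Z, hX, hY, hZ, hmem⟩ := ih
      refine ⟨-(X + Y + Z), 3 * X + 2 * Y + 2 * Z,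
        -(3 * (-(X + Y + Z)) + 3 * (3 * X + 2 * Y + 2 * Z) + Z), ?_, ?_, ?_, ?_⟩
      · have e : 3 * (m + 1) + 1 = 3 * m + 4 := by ring
        rw [e, show 3 * m + 4 = 3 * m + 4 from rfl]
        show -3 * (aSeq (3 * m + 3) + aSeq (3 * m + 2) + aSeq (3 * m + 1)) = _
        rw [hX, hY, hZ]; ring
      · have e : 3 * (m + 1) + 2 = (3 * m + 1) + 4 := by ring
        rw [e]
        show -3 * (aSeq (3 * m + 1 + 3) + aSeq (3 * m + 1 + 2) + aSeq (3 * m + 1 + 1)) = _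
        have e1 : 3 * m + 1 + 3 = 3 * m + 4 := by ring
        have e2 : 3 * m + 1 + 2 = 3 * m + 3 := by ring
        have e3 : 3 * m + 1 + 1 = 3 * m + 2 := by ring
        rw [e1, e2, e3,
          show aSeq (3 * m + 4) = -3 * (aSeq (3 * m + 3) + aSeq (3 * m + 2) + aSeq (3 * m + 1))
            from rfl, hX, hY, hZ]
        ring
      · have e : 3 * (m + 1) + 3 = (3 * m + 2) + 4 := by ring
        rw [e]
        show -3 * (aSeq (3 * m + 2 + 3) + aSeq (3 * m + 2 + 2) + aSeq (3 * m + 2 + 1)) = _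
        have e1 : 3 * m + 2 + 3 = (3 * m + 1) + 4 := by ring
        have e2 : 3 * m + 2 + 2 = 3 * m + 4 := by ring
        have e3 : 3 * m + 2 + 1 = 3 * m + 3 := by ring
        rw [e1, e2, e3]
        rw [show aSeq (3 * m + 1 + 4) =
          -3 * (aSeq (3 * m + 1 + 3) + aSeq (3 * m + 1 + 2) + aSeq (3 * m + 1 + 1)) from rfl,
          show aSeq (3 * m + 4) = -3 * (aSeq (3 * m + 3) + aSeq (3 * m + 2) + aSeq (3 * m + 1))
            from rfl]
        have e2' : 3 * m + 1 + 2 = 3 * m + 3 := by ring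
        have e3' : 3 * m + 1 + 1 = 3 * m + 2 := by ring
        rw [e2', e3', hX, hY, hZ]
        ring
      · have := step_mem _ hmem
        simp only at this
        convert this using 2 <;> push_cast <;> ring

lemma val_ge (k : ℕ) (X : ℤ) (hX : X ≠ 0) : k ≤ padicValInt 3 (3 ^ k * X) := by
  have h3 : (3 : ℤ) ^ k ∣ 3 ^ k * X := dvd_mul_right _ _
  have hne : (3 : ℤ) ^ k * X ≠ 0 := mul_ne_zero (by positivity) hX
  have := (padicValInt_dvd_iff (p := 3) k ((3 : ℤ) ^ k * X)).mp (by exact_mod_cast h3)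
  tauto

theorem ord_three_aSeq_ge (n : ℕ) (hn : 1 ≤ n) :
    aSeq n ≠ 0 ∧ ⌈(n : ℚ) / 3⌉₊ ≤ padicValInt 3 (aSeq n) := by
  set m := (n - 1) / 3 with hm
  obtain ⟨X, Y, Z, hX, hY, hZ, hmem⟩ := key m
  obtain ⟨hX0, hY0, hZ0⟩ := ne_zero_mem _ hmem
  have hceil : ⌈(n : ℚ) / 3⌉₊ ≤ m + 1 := by
    rw [Nat.ceil_le, div_le_iff₀ (by norm_num)]
    exact_mod_cast show n ≤ (m + 1) * 3 by omega
  have hcase : n = 3 * m + 1 ∨ n = 3 * m + 2 ∨ n = 3 * m + 3 := by omega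
  rcases hcase with h | h | h
  · have hX0' : X ≠ 0 := fun h => hX0 (by simp [h])
    have ha : aSeq n = 3 ^ (m + 1) * X := by rw [h, hX]
    rw [ha]
    exact ⟨mul_ne_zero (by positivity) hX0', hceil.trans (val_ge _ _ hX0')⟩
  · have hY0' : Y ≠ 0 := fun h => hY0 (by simp [h])
    have ha : aSeq n = 3 ^ (m + 1) * Y := by rw [h, hY]
    rw [ha]
    exact ⟨mul_ne_zero (by positivity) hY0', hceil.trans (val_ge _ _ hY0')⟩
  · have hZ0' : Z ≠ 0 := fun h => hZ0 (by simp [h])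
    have ha : aSeq n = 3 ^ (m + 1) * Z := by rw [h, hZ]
    rw [ha]
    exact ⟨mul_ne_zero (by positivity) hZ0', hceil.trans (val_ge _ _ hZ0')⟩
end

section
/- Define integers a_n by a_1 = -3, a_2 = 3, a_3 = -9, and a_n = -3(a_{n-1} + a_{n-2} + a_{n-3}) for n ≥ 4. Then: if n ≡ 0 (mod 3), ord_3(a_n) = ⌈n/3⌉ + 1; if n ≡ 1 (mod 3), ord_3(a_n) ∈ {⌈n/3⌉, ⌈n/3⌉ + 1}; and if n ≡ 2 (mod 3), ord_3(a_n) = ⌈n/3⌉. -/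
def Tstep : ℤ × ℤ × ℤ → ℤ × ℤ × ℤ
  | (x, y, z) =>
      (-(3*z + x + y), -(3*(-(3*z + x + y)) + 3*z + y),
        -((-(3*z + x + y)) + (-(3*(-(3*z + x + y)) + 3*z + y)) + z))

def bSeq : ℕ → ℤ × ℤ × ℤ
  | 0 => (-1, 1, -1)
  | k + 1 => Tstep (bSeq k)

lemma aSeq_rec (n : ℕ) :
    aSeq (n+4) = -3 * (aSeq (n+3) + aSeq (n+2) + aSeq (n+1)) := by
  simp [aSeq]

lemma bSeq_spec (k : ℕ) :
    aSeq (3*k+1) = 3^(k+1) * (bSeq k).1 ∧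
    aSeq (3*k+2) = 3^(k+1) * (bSeq k).2.1 ∧
    aSeq (3*k+3) = 3^(k+2) * (bSeq k).2.2 := by
  induction k with
  | zero => simp [aSeq, bSeq]
  | succ k ih =>
    obtain ⟨h1, h2, h3⟩ := ih
    rcases hb : bSeq k with ⟨x, y, z⟩
    rw [hb] at h1 h2 h3
    have g1 : aSeq (3*k+4) = 3^(k+2) * (-(3*z + x + y)) := by
      rw [aSeq_rec, h3, h2, h1]; ring
    have g2 : aSeq (3*k+5) = 3^(k+2) * (-(3*(-(3*z + x + y)) + 3*z + y)) := by
      rw [show 3*k+5 = (3*k+1)+4 by omega, aSeq_rec,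
        show 3*k+1+3 = 3*k+4 by omega, show 3*k+1+2 = 3*k+3 by omega,
        show 3*k+1+1 = 3*k+2 by omega, g1, h3, h2]
      ring
    have g3 : aSeq (3*k+6) = 3^(k+3) *
        (-((-(3*z + x + y)) + (-(3*(-(3*z + x + y)) + 3*z + y)) + z)) := by
      rw [show 3*k+6 = (3*k+2)+4 by omega, aSeq_rec,
        show 3*k+2+3 = 3*k+5 by omega, show 3*k+2+2 = 3*k+4 by omega,
        show 3*k+2+1 = 3*k+3 by omega, g1, g2, h3]
      ring
    simp only [bSeq, hb, Tstep]
    refine ⟨?_, ?_, ?_⟩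
    · rw [show 3*(k+1)+1 = 3*k+4 by omega, g1]
    · rw [show 3*(k+1)+2 = 3*k+5 by omega, g2]
    · rw [show 3*(k+1)+3 = 3*k+6 by omega, g3]

def Tm : ZMod 9 × ZMod 9 × ZMod 9 → ZMod 9 × ZMod 9 × ZMod 9
  | (x, y, z) =>
      (-(3*z + x + y), -(3*(-(3*z + x + y)) + 3*z + y),
        -((-(3*z + x + y)) + (-(3*(-(3*z + x + y)) + 3*z + y)) + z))

def Lorb : List (ZMod 9 × ZMod 9 × ZMod 9) :=
  [(8, 1, 8), (3, 2, 5), (7, 7, 8), (7, 2, 1), (6, 4, 7), (5, 5, 1), (5, 4, 8),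
   (3, 8, 8), (1, 1, 8), (1, 8, 1), (6, 7, 4), (2, 2, 1), (2, 7, 8), (3, 5, 2),
   (4, 4, 8), (4, 5, 1), (6, 1, 1), (8, 8, 1)]

set_option maxRecDepth 4000 in
lemma Tm_mem : ∀ v ∈ Lorb, Tm v ∈ Lorb := by decide

lemma cast_Tstep (x y z : ℤ) :
    ((((Tstep (x, y, z)).1 : ℤ) : ZMod 9), (((Tstep (x, y, z)).2.1 : ℤ) : ZMod 9),
      (((Tstep (x, y, z)).2.2 : ℤ) : ZMod 9))
      = Tm ((x : ZMod 9), (y : ZMod 9), (z : ZMod 9)) := by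
  simp only [Tstep, Tm]
  push_cast
  ring_nf

lemma bSeq_mem (k : ℕ) :
    (((bSeq k).1 : ZMod 9), ((bSeq k).2.1 : ZMod 9), ((bSeq k).2.2 : ZMod 9)) ∈ Lorb := by
  induction k with
  | zero => decide
  | succ k ih =>
    rcases hb : bSeq k with ⟨x, y, z⟩
    rw [hb] at ih
    simp only [bSeq, hb]
    rw [cast_Tstep]
    exact Tm_mem _ ih

set_option maxRecDepth 8000 in
lemma Lorb_props : ∀ v ∈ Lorb, v.1 ≠ 0 ∧ (∀ u : ZMod 9, v.2.1 ≠ 3*u) ∧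
    (∀ u : ZMod 9, v.2.2 ≠ 3*u) := by decide

lemma not_dvd9 {x : ℤ} (h : (x : ZMod 9) ≠ 0) : ¬ (9:ℤ) ∣ x :=
  fun hd => h ((ZMod.intCast_zmod_eq_zero_iff_dvd x 9).mpr hd)

lemma not_dvd3 {y : ℤ} (h : ∀ u : ZMod 9, (y : ZMod 9) ≠ 3*u) : ¬ (3:ℤ) ∣ y := by
  rintro ⟨t, rfl⟩
  exact h t (by push_cast; ring)

lemma val_unit {y : ℤ} (h : ¬ (3:ℤ) ∣ y) : padicValInt 3 y = 0 :=
  padicValInt.eq_zero_of_not_dvd (by exact_mod_cast h)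

lemma val_pow_mul (k : ℕ) {y : ℤ} (hy : y ≠ 0) :
    padicValInt 3 (3^k * y) = k + padicValInt 3 y := by
  haveI : Fact (Nat.Prime 3) := ⟨by norm_num⟩
  rw [padicValInt.mul (by positivity) hy]
  congr 1
  rw [show ((3:ℤ)^k) = ((3^k : ℕ) : ℤ) by push_cast; ring, padicValInt.of_nat,
    padicValNat.prime_pow]

lemma val_le_one {x : ℤ} (h9 : ¬ (9:ℤ) ∣ x) :
    padicValInt 3 x = 0 ∨ padicValInt 3 x = 1 := by
  by_cases h3 : (3:ℤ) ∣ x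
  · obtain ⟨t, rfl⟩ := h3
    have ht : ¬ (3:ℤ) ∣ t := by
      rintro ⟨s, rfl⟩
      exact h9 ⟨s, by ring⟩
    have ht0 : t ≠ 0 := by rintro rfl; exact h9 ⟨0, by ring⟩
    right
    rw [show (3:ℤ)*t = 3^1*t by ring, val_pow_mul 1 ht0, val_unit ht]
  · exact Or.inl (val_unit h3)

lemma ceil3 (k j : ℕ) (hj1 : 1 ≤ j) (hj3 : j ≤ 3) :
    ⌈((3*k+j : ℕ) : ℚ) / 3⌉₊ = k + 1 := by
  rw [Nat.ceil_eq_iff (by omega)]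
  have h1 : (1 : ℚ) ≤ j := by exact_mod_cast hj1
  have h3 : (j : ℚ) ≤ 3 := by exact_mod_cast hj3
  push_cast
  constructor
  · rw [lt_div_iff₀ (by norm_num)]; linarith
  · rw [div_le_iff₀ (by norm_num)]; linarith

theorem ord_three_aSeq (n : ℕ) (hn : 1 ≤ n) :
    aSeq n ≠ 0 ∧
    ((n % 3 = 0 → padicValInt 3 (aSeq n) = ⌈(n : ℚ) / 3⌉₊ + 1) ∧
     (n % 3 = 1 → padicValInt 3 (aSeq n) = ⌈(n : ℚ) / 3⌉₊ ∨
        padicValInt 3 (aSeq n) = ⌈(n : ℚ) / 3⌉₊ + 1) ∧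
     (n % 3 = 2 → padicValInt 3 (aSeq n) = ⌈(n : ℚ) / 3⌉₊)) := by
  obtain ⟨k, j, hj1, hj3, rfl⟩ : ∃ k j, 1 ≤ j ∧ j ≤ 3 ∧ n = 3*k + j :=
    ⟨(n-1)/3, (n-1)%3+1, by omega, by omega, by omega⟩
  obtain ⟨h1, h2, h3⟩ := bSeq_spec k
  have mem := bSeq_mem k
  rcases hb : bSeq k with ⟨x, y, z⟩
  rw [hb] at h1 h2 h3 mem
  obtain ⟨px, py, pz⟩ := Lorb_props _ mem
  have hx9 : ¬ (9:ℤ) ∣ x := not_dvd9 px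
  have hy3 : ¬ (3:ℤ) ∣ y := not_dvd3 py
  have hz3 : ¬ (3:ℤ) ∣ z := not_dvd3 pz
  have hx0 : x ≠ 0 := by rintro rfl; exact hx9 ⟨0, by ring⟩
  have hy0 : y ≠ 0 := by rintro rfl; exact hy3 ⟨0, by ring⟩
  have hz0 : z ≠ 0 := by rintro rfl; exact hz3 ⟨0, by ring⟩
  have hceil := ceil3 k j hj1 hj3
  interval_cases j
  · refine ⟨by rw [h1]; positivity, ?_, ?_, ?_⟩
    · intro h; omega
    · intro _
      rw [h1, val_pow_mul (k+1) hx0, hceil]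
      rcases val_le_one hx9 with h | h <;> [left; right] <;> omega
    · intro h; omega
  · refine ⟨by rw [h2]; positivity, ?_, ?_, ?_⟩
    · intro h; omega
    · intro h; omega
    · intro _
      rw [h2, val_pow_mul (k+1) hy0, val_unit hy3, hceil]
  · refine ⟨by rw [h3]; positivity, ?_, ?_, ?_⟩
    · intro _
      rw [h3, val_pow_mul (k+2) hz0, val_unit hz3, hceil]
    · intro h; omega
    · intro h; omega
end

section
/- Define b_n by a_n = (-1)^n 3^{⌈n/3⌉} b_n where a_1=-3, a_2=3, a_3=-9, a_n = -3(a_{n-1}+a_{n-2}+a_{n-3}) for n ≥ 4. Then for every t ≥ 1, b_{t+27} ≡ b_t (mod 9). -/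
/-!
The recurrence of `a` is linear, so `d t = a (t + 27) + 3⁹ a t` satisfies it too, and each step
of the recurrence multiplies by `-3`. Hence once `3¹²` divides `d 1, d 2, d 3`, the power of `3`
dividing `d t` grows by one every three steps: `3 ^ (⌈t/3⌉ + 11) ∣ d t`. Substituting `b`, the two
terms of `d t` carry the same power `3 ^ (⌈t/3⌉ + 9)` and opposite signs, so the two remaining
factors of `3` say exactly that `9 ∣ b (t + 27) - b t`.
-/

lemma Nat.ceil_natCast_div_three (m : ℕ) : ⌈(m : ℚ) / 3⌉₊ = (m + 2) / 3 := by
  have h := Rat.ceil_natCast_div_natCast m 3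
  rw [← Int.ceil_toNat, Nat.cast_ofNat] at *
  rw [h]
  omega

def SatisfiesTribRec {R : Type*} [Mul R] [Add R] (p : R) (d : ℕ → R) : Prop :=
  ∀ n, d (n + 4) = p * (d (n + 3) + d (n + 2) + d (n + 1))

lemma SatisfiesTribRec.shift {R : Type*} [Mul R] [Add R] {p : R} {d : ℕ → R}
    (hd : SatisfiesTribRec p d) (m : ℕ) : SatisfiesTribRec p (fun n ↦ d (n + m)) := by
  intro n
  simpa only [Nat.add_right_comm _ m] using hd (n + m)

namespace SatisfiesTribRec

variable {R : Type*} [CommSemiring R] {p : R} {d e : ℕ → R}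

lemma add (hd : SatisfiesTribRec p d) (he : SatisfiesTribRec p e) :
    SatisfiesTribRec p (d + e) := by
  intro n
  simp only [Pi.add_apply, hd n, he n]
  ring

lemma const_mul (hd : SatisfiesTribRec p d) (c : R) :
    SatisfiesTribRec p (fun n ↦ c * d n) := by
  intro n
  simp only [hd n]
  ring

lemma pow_dvd (hd : SatisfiesTribRec p d) {k : ℕ}
    (h1 : p ^ k ∣ d 1) (h2 : p ^ k ∣ d 2) (h3 : p ^ k ∣ d 3) (n : ℕ) :
    p ^ (k + n / 3) ∣ d (n + 1) := by
  induction n using Nat.strong_induction_on with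
  | _ n ih =>
    match n, ih with
    | 0, _ => simpa using h1
    | 1, _ => simpa using h2
    | 2, _ => simpa using h3
    | n + 3, ih =>
      have prev (j : ℕ) (hnj : n ≤ j) (hj : j < n + 3) : p ^ (k + n / 3) ∣ d (j + 1) :=
        (pow_dvd_pow p (by omega)).trans (ih j hj)
      rw [hd, show k + (n + 3) / 3 = k + n / 3 + 1 by omega, pow_succ']
      exact mul_dvd_mul_left p
        (((prev (n + 2) (by omega) (by omega)).add (prev (n + 1) (by omega) (by omega))).add
          (prev n le_rfl (by omega)))

end SatisfiesTribRec

lemma aSeq_satisfiesTribRec : SatisfiesTribRec (-3) aSeq := fun _ ↦ rfl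

lemma three_pow_dvd_aSeq_add_twentyseven (n : ℕ) :
    (3 : ℤ) ^ (n / 3 + 12) ∣ aSeq (n + 1 + 27) + 3 ^ 9 * aSeq (n + 1) := by
  have hd : SatisfiesTribRec (-3) (fun t ↦ aSeq (t + 27) + 3 ^ 9 * aSeq t) :=
    (aSeq_satisfiesTribRec.shift 27).add (aSeq_satisfiesTribRec.const_mul _)
  have := hd.pow_dvd (k := 12) (by decide) (by decide) (by decide) n
  rw [add_comm] at this
  exact (pow_dvd_pow_of_dvd (dvd_neg.mpr dvd_rfl) _).trans this

theorem b_periodic_mod_nine (b : ℕ → ℤ)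
    (hb : ∀ n, 1 ≤ n → aSeq n = (-1) ^ n * 3 ^ (⌈(n : ℚ) / 3⌉₊) * b n)
    (t : ℕ) (ht : 1 ≤ t) :
    b (t + 27) ≡ b t [ZMOD 9] := by
  obtain ⟨n, rfl⟩ := Nat.exists_eq_add_of_le' ht
  have hdvd := three_pow_dvd_aSeq_add_twentyseven n
  rw [hb _ (by omega), hb _ (by omega), Nat.ceil_natCast_div_three, Nat.ceil_natCast_div_three,
    show (n + 1 + 27 + 2) / 3 = n / 3 + 10 by omega, show (n + 1 + 2) / 3 = n / 3 + 1 by omega,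
    show (-1 : ℤ) ^ (n + 1 + 27) * 3 ^ (n / 3 + 10) * b (n + 1 + 27)
        + 3 ^ 9 * ((-1) ^ (n + 1) * 3 ^ (n / 3 + 1) * b (n + 1))
      = 3 ^ (n / 3 + 10) * ((-1) ^ n * (b (n + 1 + 27) - b (n + 1))) by ring,
    show n / 3 + 12 = n / 3 + 10 + 2 by rfl, pow_add,
    mul_dvd_mul_iff_left (pow_ne_zero _ three_ne_zero), (isUnit_neg_one.pow n).dvd_mul_left] at hdvd
  exact (Int.modEq_iff_dvd.mpr hdvd).symm
end

section
/- Let H be a k-regular graph such that no two distinct vertices u, v of H have equal closed neighborhoods N[u] = N[v]. If G is a graph with D(G,x) = D(H,x), then G is also k-regular. -/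
open Polynomial SimpleGraph

namespace DomAux

open Finset

variable {V : Type*} [Fintype V]

open Classical in
/-- Closed neighborhood as a Finset, defined classically. -/
noncomputable def cN (G : SimpleGraph V) (v : V) : Finset V :=
  insert v (Finset.univ.filter (fun u => G.Adj v u))

lemma mem_cN {G : SimpleGraph V} {v u : V} : u ∈ cN G v ↔ u = v ∨ G.Adj v u := by
  classical
  simp [cN]

lemma cN_card (G : SimpleGraph V) [DecidableRel G.Adj] (v : V) :
    (cN G v).card = G.degree v + 1 := by
  classical
  have hv : v ∉ Finset.univ.filter (fun u => G.Adj v u) := by simp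
  have h1 : cN G v = insert v (Finset.univ.filter (fun u => G.Adj v u)) := by
    ext x; simp [mem_cN]
  have h2 : (Finset.univ.filter (fun u => G.Adj v u)) = G.neighborFinset v := by
    ext x; simp [SimpleGraph.mem_neighborFinset]
  rw [h1, Finset.card_insert_of_notMem hv, h2, SimpleGraph.card_neighborFinset_eq_degree]

lemma isDomSet_iff {G : SimpleGraph V} {S : Finset V} :
    IsDomSet G S ↔ ∀ v, ∃ u ∈ cN G v, u ∈ S := by
  constructor
  · intro h v
    rcases h v with hv | ⟨u, hu, ha⟩
    · exact ⟨v, mem_cN.mpr (Or.inl rfl), hv⟩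
    · exact ⟨u, mem_cN.mpr (Or.inr ha.symm), hu⟩
  · intro h v
    rcases h v with ⟨u, hu, huS⟩
    rcases mem_cN.mp hu with rfl | ha
    · exact Or.inl huS
    · exact Or.inr ⟨u, huS, ha.symm⟩

lemma not_isDomSet_iff {G : SimpleGraph V} {S : Finset V} :
    ¬ IsDomSet G S ↔ ∃ v, ∀ u ∈ cN G v, u ∉ S := by
  rw [isDomSet_iff]
  push_neg
  rfl

open Classical in
noncomputable def domSets (G : SimpleGraph V) (i : ℕ) : Finset (Finset V) :=
  (Finset.powersetCard i Finset.univ).filter (fun S => IsDomSet G S)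

open Classical in
noncomputable def badSets (G : SimpleGraph V) (i : ℕ) : Finset (Finset V) :=
  (Finset.powersetCard i Finset.univ).filter (fun S => ¬ IsDomSet G S)

lemma mem_domSets {G : SimpleGraph V} {i : ℕ} {S : Finset V} :
    S ∈ domSets G i ↔ S.card = i ∧ IsDomSet G S := by
  classical
  simp [domSets, Finset.mem_powersetCard_univ]

lemma mem_badSets {G : SimpleGraph V} {i : ℕ} {S : Finset V} :
    S ∈ badSets G i ↔ S.card = i ∧ ¬ IsDomSet G S := by
  classical
  simp [badSets, Finset.mem_powersetCard_univ]

lemma dcount_eq (G : SimpleGraph V) (i : ℕ) :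
    Nat.card {S : Finset V // IsDomSet G S ∧ S.card = i} = (domSets G i).card := by
  classical
  rw [Nat.card_eq_fintype_card, Fintype.card_subtype]
  congr 1
  ext S
  simp [mem_domSets, and_comm]

lemma dom_add_bad (G : SimpleGraph V) (i : ℕ) :
    (domSets G i).card + (badSets G i).card = (Fintype.card V).choose i := by
  classical
  have h := Finset.card_filter_add_card_filter_not
    (s := Finset.powersetCard i (Finset.univ : Finset V)) (p := fun S => IsDomSet G S)
  rw [Finset.card_powersetCard, Finset.card_univ] at h
  have e1 : (Finset.powersetCard i (Finset.univ : Finset V)).filter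
      (fun S => IsDomSet G S) = domSets G i := by
    ext S; simp [mem_domSets, Finset.mem_powersetCard_univ, and_comm]
  have e2 : (Finset.powersetCard i (Finset.univ : Finset V)).filter
      (fun S => ¬ IsDomSet G S) = badSets G i := by
    ext S; simp [mem_badSets, Finset.mem_powersetCard_univ, and_comm]
  rw [e1, e2] at h
  exact h

lemma coeff_domPoly (G : SimpleGraph V) (i : ℕ) :
    (domPoly G).coeff i = ((domSets G i).card : ℤ) := by
  classical
  unfold domPoly
  rw [Polynomial.finset_sum_coeff]
  simp only [Polynomial.coeff_smul, Polynomial.coeff_X_pow, smul_eq_mul, mul_ite, mul_one,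
    mul_zero]
  rw [Finset.sum_ite_eq (Finset.range (Fintype.card V + 1)) i]
  by_cases hi : i ∈ Finset.range (Fintype.card V + 1)
  · rw [if_pos hi, dcount_eq]
  · rw [if_neg hi]
    have : domSets G i = ∅ := by
      ext S
      simp only [mem_domSets, Finset.notMem_empty, iff_false, not_and]
      intro hS
      exact absurd (hS ▸ Finset.card_le_univ S) (by simp at hi; omega)
    simp [this]

lemma domSets_self (G : SimpleGraph V) : domSets G (Fintype.card V) = {Finset.univ} := by
  classical
  ext S
  simp only [mem_domSets, Finset.mem_singleton]
  constructor
  · rintro ⟨h, -⟩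
    exact (Finset.card_eq_iff_eq_univ S).mp (by simpa using h)
  · rintro rfl
    exact ⟨by simp, fun v => Or.inl (Finset.mem_univ v)⟩

open Classical in
lemma exists_nondom (G : SimpleGraph V) (v : V) {m : ℕ} (h1 : (cN G v).card ≤ m)
    (h2 : m ≤ Fintype.card V) :
    ∃ S : Finset V, S.card = Fintype.card V - m ∧ ¬ IsDomSet G S := by
  obtain ⟨A, hA1, hA2⟩ := Finset.exists_superset_card_eq h1 h2
  refine ⟨Aᶜ, by rw [Finset.card_compl, hA2], ?_⟩
  intro hdom
  obtain ⟨u, hu, huS⟩ := isDomSet_iff.mp hdom v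
  exact Finset.mem_compl.mp huS (hA1 hu)

open Classical in
lemma badSets_eq (G : SimpleGraph V) (k : ℕ) (hkn : k + 1 ≤ Fintype.card V)
    (hδ : ∀ v, k + 1 ≤ (cN G v).card) :
    badSets G (Fintype.card V - (k + 1)) =
      (Finset.univ.filter (fun v => (cN G v).card = k + 1)).image (fun v => (cN G v)ᶜ) := by
  ext S
  simp only [mem_badSets, Finset.mem_image, Finset.mem_filter, Finset.mem_univ, true_and]
  constructor
  · rintro ⟨hScard, hSnd⟩
    obtain ⟨v, hsub'⟩ := not_isDomSet_iff.mp hSnd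
    have hsub : cN G v ⊆ Sᶜ := fun u hu => Finset.mem_compl.mpr (hsub' u hu)
    have hSc : Sᶜ.card = k + 1 := by
      rw [Finset.card_compl, hScard]; omega
    have heq : cN G v = Sᶜ := Finset.eq_of_subset_of_card_le hsub (by rw [hSc]; exact hδ v)
    exact ⟨v, by rw [heq, hSc], by rw [heq, compl_compl]⟩
  · rintro ⟨v, hv, rfl⟩
    refine ⟨by rw [Finset.card_compl, hv], ?_⟩
    rw [not_isDomSet_iff]
    exact ⟨v, fun u hu => by simpa using fun h => (Finset.mem_compl.mp h) hu⟩

open Classical in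
lemma cN_card_eq_of_badSets_card (G : SimpleGraph V) (k : ℕ) (hkn : k + 1 ≤ Fintype.card V)
    (hδ : ∀ v, k + 1 ≤ (cN G v).card)
    (hbad : (badSets G (Fintype.card V - (k + 1))).card = Fintype.card V) :
    ∀ v, (cN G v).card = k + 1 := by
  have hle : Fintype.card V ≤ (Finset.univ.filter (fun v => (cN G v).card = k + 1)).card := by
    rw [← hbad, badSets_eq G k hkn hδ]
    exact Finset.card_image_le
  have hfil : (Finset.univ.filter (fun v => (cN G v).card = k + 1)) = Finset.univ := by
    apply Finset.eq_univ_of_card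
    have h2 := Finset.card_filter_le (Finset.univ : Finset V)
      (fun v => (cN G v).card = k + 1)
    rw [Finset.card_univ] at h2
    omega
  intro v
  have := Finset.eq_univ_iff_forall.mp hfil v
  simpa using this

open Classical in
lemma badSets_card_of_inj (G : SimpleGraph V) (k : ℕ) (hkn : k + 1 ≤ Fintype.card V)
    (hc : ∀ v, (cN G v).card = k + 1)
    (hinj : ∀ a b : V, cN G a = cN G b → a = b) :
    (badSets G (Fintype.card V - (k + 1))).card = Fintype.card V := by
  rw [badSets_eq G k hkn (fun v => (hc v).ge)]
  have hfil : (Finset.univ.filter (fun v => (cN G v).card = k + 1)) = Finset.univ :=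
    Finset.filter_true_of_mem (fun v _ => hc v)
  rw [hfil, Finset.card_image_of_injective _
    (fun a b hab => hinj a b (compl_injective hab)), Finset.card_univ]

end DomAux

open DomAux Finset in
theorem regular_of_domPoly_eq {VH VG : Type*} [Fintype VH] [Fintype VG] [DecidableEq VH]
    (H : SimpleGraph VH) [DecidableRel H.Adj] (G : SimpleGraph VG) [DecidableRel G.Adj]
    (k : ℕ) (hreg : H.IsRegularOfDegree k)
    (hnbr : ∀ u v : VH, u ≠ v →
      insert u (H.neighborFinset u) ≠ insert v (H.neighborFinset v))
    (hD : domPoly G = domPoly H) :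
    G.IsRegularOfDegree k := by
  have hd : ∀ i, (domSets G i).card = (domSets H i).card := by
    intro i
    have h := congrArg (fun p => p.coeff i) hD
    simp only [coeff_domPoly] at h
    exact_mod_cast h
  -- the two graphs have the same number of vertices
  have hcard : Fintype.card VG = Fintype.card VH := by
    have le1 : Fintype.card VG ≤ Fintype.card VH := by
      have h1 : (domSets H (Fintype.card VG)).card = 1 := by
        rw [← hd, domSets_self]; simp
      obtain ⟨S, hS⟩ := Finset.card_pos.mp (by omega : 0 < (domSets H (Fintype.card VG)).card)
      have := (mem_domSets.mp hS).1
      calc Fintype.card VG = S.card := this.symm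
        _ ≤ Fintype.card VH := Finset.card_le_univ S
    have le2 : Fintype.card VH ≤ Fintype.card VG := by
      have h1 : (domSets G (Fintype.card VH)).card = 1 := by
        rw [hd, domSets_self]; simp
      obtain ⟨S, hS⟩ := Finset.card_pos.mp (by omega : 0 < (domSets G (Fintype.card VH)).card)
      have := (mem_domSets.mp hS).1
      calc Fintype.card VH = S.card := this.symm
        _ ≤ Fintype.card VG := Finset.card_le_univ S
    omega
  rcases Nat.eq_zero_or_pos (Fintype.card VH) with h0 | hpos
  · intro v
    exact ((Fintype.card_eq_zero_iff.mp (hcard.trans h0)).false v).elim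
  -- there is a vertex in H, hence k + 1 ≤ card VH
  obtain ⟨w⟩ := Fintype.card_pos_iff.mp hpos
  have hkn : k + 1 ≤ Fintype.card VH := by
    have := H.degree_lt_card_verts w
    rw [hreg w] at this
    omega
  have hcNH : ∀ v, (cN H v).card = k + 1 := fun v => by rw [cN_card, hreg v]
  -- every set of size (card VH) - k dominates H
  have hallH : ∀ S : Finset VH, S.card = Fintype.card VH - k → IsDomSet H S := by
    intro S hS
    by_contra hnd
    obtain ⟨v, hsub⟩ := not_isDomSet_iff.mp hnd
    have hdisj : Disjoint (cN H v) S := Finset.disjoint_left.mpr hsub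
    have h1 : (cN H v).card + S.card ≤ Fintype.card VH := by
      rw [← Finset.card_union_of_disjoint hdisj]
      exact Finset.card_le_univ _
    rw [hcNH v, hS] at h1
    omega
  -- hence every set of size (card VH) - k dominates G
  have hallG : ∀ S : Finset VG, S.card = Fintype.card VH - k → IsDomSet G S := by
    have hfull : domSets H (Fintype.card VH - k) =
        Finset.powersetCard (Fintype.card VH - k) Finset.univ := by
      apply Finset.eq_of_subset_of_card_le
      · intro S hS
        rw [Finset.mem_powersetCard_univ]
        exact (mem_domSets.mp hS).1
      · rw [Finset.card_powersetCard, Finset.card_univ]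
        have h2 := dom_add_bad H (Fintype.card VH - k)
        have h3 : badSets H (Fintype.card VH - k) = ∅ := by
          ext S
          simp only [mem_badSets, Finset.notMem_empty, iff_false, not_and, not_not]
          exact fun h => hallH S h
        rw [h3] at h2
        simp at h2
        omega
    intro S hS
    have h1 : (domSets G (Fintype.card VH - k)).card =
        (Fintype.card VG).choose (Fintype.card VH - k) := by
      rw [hd, hfull, Finset.card_powersetCard, Finset.card_univ, hcard]
    have h2 : domSets G (Fintype.card VH - k) =
        Finset.powersetCard (Fintype.card VH - k) Finset.univ := by
      apply Finset.eq_of_subset_of_card_le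
      · intro T hT
        rw [Finset.mem_powersetCard_univ]
        exact (mem_domSets.mp hT).1
      · rw [Finset.card_powersetCard, Finset.card_univ, h1]
    have : S ∈ domSets G (Fintype.card VH - k) := by
      rw [h2, Finset.mem_powersetCard_univ]; exact hS
    exact (mem_domSets.mp this).2
  -- minimum degree of G is at least k
  have hδG : ∀ v : VG, k + 1 ≤ (cN G v).card := by
    intro v
    by_contra h
    push_neg at h
    obtain ⟨S, hS1, hS2⟩ := exists_nondom G v (Nat.lt_succ_iff.mp h)
      (by rw [hcard]; omega)
    rw [hcard] at hS1
    exact hS2 (hallG S hS1)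
  -- bad set counts at size (card VH) - (k+1)
  have hbadcard : (badSets G (Fintype.card VH - (k + 1))).card =
      (badSets H (Fintype.card VH - (k + 1))).card := by
    have h1 := dom_add_bad G (Fintype.card VH - (k + 1))
    have h2 := dom_add_bad H (Fintype.card VH - (k + 1))
    rw [hcard] at h1
    have := hd (Fintype.card VH - (k + 1))
    omega
  have hinj : ∀ a b : VH, cN H a = cN H b → a = b := by
    intro a b hab
    by_contra hne
    apply hnbr a b hne
    ext x
    simp only [Finset.mem_insert, SimpleGraph.mem_neighborFinset]
    simpa [mem_cN] using Finset.ext_iff.mp hab x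
  have hbadH : (badSets H (Fintype.card VH - (k + 1))).card = Fintype.card VH :=
    badSets_card_of_inj H k hkn hcNH hinj
  have hbadG : (badSets G (Fintype.card VG - (k + 1))).card = Fintype.card VG := by
    rw [hcard, hbadcard, hbadH]
  have hfin := cN_card_eq_of_badSets_card G k (by omega : k + 1 ≤ Fintype.card VG) hδG hbadG
  intro v
  have hv := hfin v
  have := cN_card G v
  omega
end
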